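/- arXiv:1609.00605 — 3 statements merged into one kernel-verified Lean document; each statement's English description precedes it below -/
import Mathlib

section
/- Let X be a second countable topological space and f : X → X a continuous map. There exist at most countably many attracting sets of f, i.e. the collection of sets of the form ⋂_{n≥0} f^n(U), where U ranges over open sets with f(closure(U)) ⊆ U and closure(U) compact, is countable. -/
/-!
Every trapping region `U` can be shrunk to a finite union `V` of basic open sets with
`f '' closure U ⊆ V ⊆ U` (compactness of `f '' closure U`), and `V` is squeezed between `U`
and `f '' U`, so it has the same attracting set. Hence every attracting set is indexed by a
finite subset of a countable basis.
-/

open Set TopologicalSpace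

theorem iInter_image_iterate_eq_of_image_subset_of_subset {X : Type*} {f : X → X}
    {U V : Set X} (hUV : f '' U ⊆ V) (hVU : V ⊆ U) :
    ⋂ n : ℕ, f^[n] '' V = ⋂ n : ℕ, f^[n] '' U := by
  refine subset_antisymm (iInter_mono fun n => image_mono hVU) (subset_iInter fun n => ?_)
  calc ⋂ m : ℕ, f^[m] '' U ⊆ f^[n + 1] '' U := iInter_subset _ (n + 1)
    _ = f^[n] '' (f '' U) := by rw [Function.iterate_succ, image_comp]
    _ ⊆ f^[n] '' V := image_mono hUV

theorem TopologicalSpace.IsTopologicalBasis.exists_finite_sUnion_between {X : Type*}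
    [TopologicalSpace X] {B : Set (Set X)} (hB : IsTopologicalBasis B) {K U : Set X}
    (hK : IsCompact K) (hU : IsOpen U) (hKU : K ⊆ U) :
    ∃ s ⊆ B, s.Finite ∧ K ⊆ ⋃₀ s ∧ ⋃₀ s ⊆ U := by
  have hcover : K ⊆ ⋃ b ∈ {b ∈ B | b ⊆ U}, b := by
    rwa [← sUnion_eq_biUnion, ← hB.open_eq_sUnion' hU]
  obtain ⟨s, hsBU, hs, hKs⟩ :=
    hK.elim_finite_subcover_image (fun b hb => hB.isOpen hb.1) hcover
  exact ⟨s, fun b hb => (hsBU hb).1, hs, by rwa [sUnion_eq_biUnion],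
    sUnion_subset fun b hb => (hsBU hb).2⟩

/-- A continuous self-map of a second countable topological space has at most countably
many attracting sets, i.e. the collection of sets of the form `⋂ₙ fⁿ(U)` for trapping
regions `U` (open, with compact closure mapped by `f` into `U`) is countable. -/
theorem stmt_5 {X : Type*} [TopologicalSpace X] [SecondCountableTopology X]
    (f : X → X) (hf : Continuous f) :
    Set.Countable {A : Set X | ∃ U : Set X, IsOpen U ∧ f '' closure U ⊆ U ∧
      IsCompact (closure U) ∧ A = ⋂ n : ℕ, f^[n] '' U} := by
  refine ((countable_ofPred_finite_subset (countable_countableBasis X)).image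
    fun s => ⋂ n : ℕ, f^[n] '' ⋃₀ s).mono ?_
  rintro A ⟨U, hU, hfU, hcU, rfl⟩
  obtain ⟨s, hsB, hs, hfUs, hsU⟩ := (isBasis_countableBasis X).exists_finite_sUnion_between
    (hcU.image hf) hU hfU
  exact ⟨s, ⟨hs, hsB⟩, iInter_image_iterate_eq_of_image_subset_of_subset
    ((image_mono subset_closure).trans hfUs) hsU⟩
end

section
/- Fix η > 0. In a metric measure space where every ball of radius η/3 has measure at least v > 0 and the total measure is 1, any family of pairwise disjoint balls of radius η/3 has at most ⌊1/v⌋ elements. Consequently, if (A_j) is a monotone (say decreasing) sequence of attracting sets in a compact metric probability space X, each admitting a trapping region V_j such that f maps the η-neighborhood of V_j into V_j, then the sequence (A_j) takes at most finitely many distinct values, with a bound depending only on η (via v). -/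
open Metric Set MeasureTheory Function

/-!
Disjoint balls each of measure at least `v` in a probability space number at most `⌊1/v⌋`.
For the attracting sets, compactness and the trapping condition give `A j ⊆ f '' A j`; hence
`A i ⊆ thickening η (V j)` implies `A i ⊆ f '' thickening η (V j) ⊆ V j`, and then `A i ⊆ A j`.
So each strict drop `A j ⊊ A i` (`i < j`) is witnessed by a point of `A i` at distance at least
`η` from `V j ⊇ A k` for all `k ≥ j`. The witnesses of `m` successive drops are therefore
`η`-separated, their `η/3`-balls are disjoint, and `m ≤ ⌊1/v⌋`.
-/

theorem card_le_floor_inv_of_pairwise_disjoint {X ι : Type*} [MeasurableSpace X] [Fintype ι]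
    {μ : Measure X} [IsProbabilityMeasure μ] {t : ι → Set X} {v : ℝ} (hv : 0 < v)
    (ht : ∀ i, MeasurableSet (t i)) (hdisj : Pairwise (Disjoint on t))
    (hμt : ∀ i, v ≤ μ.real (t i)) : Fintype.card ι ≤ ⌊1 / v⌋₊ := by
  refine Nat.le_floor ((le_div_iff₀ hv).2 ?_)
  calc (Fintype.card ι : ℝ) * v = Fintype.card ι • v := (nsmul_eq_mul _ _).symm
    _ ≤ ∑ i, μ.real (t i) := Finset.card_nsmul_le_sum _ _ _ fun i _ => hμt i
    _ = μ.real (⋃ i, t i) := (measureReal_iUnion_fintype hdisj ht).symm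
    _ ≤ 1 := measureReal_le_one

theorem iInter_image_subset_image_iInter {α β : Type*} [TopologicalSpace α] [CompactSpace α]
    [TopologicalSpace β] [T1Space β] {f : α → β} (hf : Continuous f) {K : ℕ → Set α}
    (hK : Antitone K) (hKc : ∀ n, IsClosed (K n)) : ⋂ n, f '' K n ⊆ f '' ⋂ n, K n := by
  intro y hy
  have hfiber : ∀ n, (f ⁻¹' {y} ∩ K n).Nonempty := fun n => by
    obtain ⟨x, hxK, rfl⟩ := mem_iInter.1 hy n
    exact ⟨x, rfl, hxK⟩
  have hclosed : ∀ n, IsClosed (f ⁻¹' {y} ∩ K n) := fun n =>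
    (isClosed_singleton.preimage hf).inter (hKc n)
  obtain ⟨x, hx⟩ := IsCompact.nonempty_iInter_of_sequence_nonempty_isCompact_isClosed _
    (fun n => inter_subset_inter_right _ (hK n.le_succ)) hfiber (hclosed 0).isCompact hclosed
  exact ⟨x, mem_iInter.2 fun n => (mem_iInter.1 hx n).2, (mem_iInter.1 hx 0).1⟩

section AttractingSet

variable {X : Type*} {f : X → X} {V W : Set X}

def attractingSet (f : X → X) (V : Set X) : Set X :=
  ⋂ n : ℕ, f^[n] '' V

theorem attractingSet_subset : attractingSet f V ⊆ V := fun _ hx => by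
  simpa using mem_iInter.1 hx 0

theorem subset_attractingSet_of_subset_image {B : Set X} (hB : B ⊆ f '' B) (hBV : B ⊆ V) :
    B ⊆ attractingSet f V := by
  have hiter : ∀ n, B ⊆ f^[n] '' B := fun n => by
    induction n with
    | zero => simp
    | succ n ih => rw [iterate_succ', image_comp]; exact hB.trans (image_mono ih)
  exact subset_iInter fun n => (hiter n).trans (image_mono hBV)

theorem attractingSet_subset_image [TopologicalSpace X] [CompactSpace X] [T2Space X]
    (hf : Continuous f) (htrap : f '' closure V ⊆ V) :
    attractingSet f V ⊆ f '' attractingSet f V := by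
  -- `attractingSet f V = ⋂ n, fⁿ(closure V)`, a decreasing intersection of compact sets,
  -- and such intersections commute with `f`.
  set K : ℕ → Set X := fun n => f^[n] '' closure V
  have hKV : ∀ n, K (n + 1) ⊆ f^[n] '' V := fun n => by
    simp only [K, iterate_succ, image_comp]
    exact image_mono htrap
  have hK : Antitone K := antitone_nat_of_succ_le fun n =>
    (hKV n).trans (image_mono subset_closure)
  have hKA : ⋂ n, K n ⊆ attractingSet f V := fun x hx =>
    mem_iInter.2 fun n => hKV n (mem_iInter.1 hx (n + 1))
  calc attractingSet f V ⊆ ⋂ n, K (n + 1) := fun x hx =>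
        mem_iInter.2 fun n => image_mono subset_closure (mem_iInter.1 hx (n + 1))
    _ = ⋂ n, f '' K n := by simp only [K, iterate_succ', image_comp]
    _ ⊆ f '' ⋂ n, K n :=
      iInter_image_subset_image_iInter hf hK fun n => (isClosed_closure.isCompact.image
        (hf.iterate n)).isClosed
    _ ⊆ f '' attractingSet f V := image_mono hKA

theorem attractingSet_subset_attractingSet [TopologicalSpace X] [CompactSpace X] [T2Space X]
    (hf : Continuous f) (htrap : f '' closure W ⊆ W) {U : Set X} (hU : f '' U ⊆ V)
    (hWU : attractingSet f W ⊆ U) : attractingSet f W ⊆ attractingSet f V :=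
  subset_attractingSet_of_subset_image (attractingSet_subset_image hf htrap)
    ((attractingSet_subset_image hf htrap).trans ((image_mono hWU).trans hU))

end AttractingSet

theorem exists_pairwise_le_dist_of_strictMono {X : Type*} [PseudoMetricSpace X]
    {A V : ℕ → Set X} {η : ℝ} (hA : Antitone A) (hAV : ∀ j, A j ⊆ V j)
    (hsep : ∀ i j, A i ⊆ thickening η (V j) → A i ⊆ A j) {m : ℕ} {g : Fin (m + 1) → ℕ}
    (hg : StrictMono g) (hinj : Injective (A ∘ g)) :
    ∃ x : Fin m → X, Pairwise fun k l => η ≤ dist (x k) (x l) := by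
  have hdrop : ∀ k : Fin m, ∃ x ∈ A (g k.castSucc), x ∉ thickening η (V (g k.succ)) := by
    intro k
    by_contra! h
    refine Fin.castSucc_lt_succ.ne (hinj (?_ : A (g k.castSucc) = A (g k.succ)))
    exact (hsep _ _ h).antisymm (hA (hg Fin.castSucc_lt_succ).le)
  choose x hxA hxV using hdrop
  have hfar : ∀ k l : Fin m, k < l → η ≤ dist (x k) (x l) := by
    intro k l hkl
    have hxl : x l ∈ V (g k.succ) :=
      hAV _ (hA (hg.monotone (Fin.succ_le_castSucc_iff.2 hkl)) (hxA l))
    by_contra! h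
    exact hxV k (mem_thickening_iff.2 ⟨x l, hxl, h⟩)
  refine ⟨x, fun k l hkl => ?_⟩
  rcases hkl.lt_or_gt with h | h
  · exact hfar k l h
  · exact dist_comm (x k) (x l) ▸ hfar l k h

theorem encard_range_le_of_strictMono_injective {β : Type*} {A : ℕ → β} {N : ℕ}
    (h : ∀ m (g : Fin (m + 1) → ℕ), StrictMono g → Injective (A ∘ g) → m ≤ N) :
    (range A).encard ≤ N + 1 := by
  by_contra! hlt
  obtain ⟨T, hTA, hT⟩ := exists_subset_encard_eq (Order.add_one_le_of_lt hlt)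
  obtain ⟨I, rfl, hinjOn⟩ := exists_image_eq_injOn_of_subset_range hTA
  have hI : I.encard = (N + 2 : ℕ) := by rw [← hinjOn.encard_image, hT]; rfl
  have hIfin := finite_of_encard_eq_coe hI
  have hcard : hIfin.toFinset.card = N + 2 := by
    rw [← Nat.cast_inj (R := ℕ∞), ← hIfin.encard_eq_coe_toFinset_card, hI]
  set g := hIfin.toFinset.orderEmbOfFin hcard
  have hgI : ∀ k, g k ∈ I := fun k =>
    hIfin.mem_toFinset.1 (hIfin.toFinset.orderEmbOfFin_mem hcard k)
  have := h (N + 1) g g.strictMono fun k l hkl => g.injective (hinjOn (hgI k) (hgI l) hkl)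
  omega

theorem stmt_6_general {X : Type*} [MetricSpace X] [CompactSpace X]
    [MeasurableSpace X] [BorelSpace X]
    (μ : Measure X) [IsProbabilityMeasure μ]
    (η v : ℝ) (hη : 0 < η) (hv : 0 < v)
    (hball : ∀ x : X, v ≤ (μ (ball x (η / 3))).toReal)
    (f : X → X) (hf : Continuous f)
    (V : ℕ → Set X)
    (htrap : ∀ j, f '' Metric.thickening η (V j) ⊆ V j)
    (A : ℕ → Set X) (hA : ∀ j, A j = ⋂ n : ℕ, f^[n] '' V j)
    (hmono : Antitone A) :
    (∀ s : Finset X, (∀ x ∈ s, ∀ y ∈ s, x ≠ y →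
        Disjoint (ball x (η / 3)) (ball y (η / 3))) → s.card ≤ ⌊1 / v⌋₊) ∧
      (Set.range A).Finite ∧ (Set.range A).ncard ≤ ⌊1 / v⌋₊ + 1 := by
  refine ⟨fun s hs => ?_, encard_le_coe_iff_finite_ncard_le.1 ?_⟩
  · simpa using card_le_floor_inv_of_pairwise_disjoint (t := fun x : s => ball (x : X) (η / 3)) hv
      (fun _ => measurableSet_ball) (fun x y hxy => hs x x.2 y y.2 (Subtype.coe_ne_coe.2 hxy))
      fun _ => hball _
  obtain rfl : A = fun j => attractingSet f (V j) := funext hA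
  have hclosure : ∀ j, f '' closure (V j) ⊆ V j := fun j =>
    (image_mono (closure_subset_thickening hη _)).trans (htrap j)
  refine encard_range_le_of_strictMono_injective fun m g hg hinj => ?_
  obtain ⟨x, hx⟩ := exists_pairwise_le_dist_of_strictMono hmono (fun _ => attractingSet_subset)
    (fun i j => attractingSet_subset_attractingSet hf (hclosure i) (htrap j)) hg hinj
  simpa using card_le_floor_inv_of_pairwise_disjoint (t := fun k => ball (x k) (η / 3)) hv
    (fun _ => measurableSet_ball) (fun k l hkl => ball_disjoint_ball (by linarith [hx hkl]))
    fun _ => hball _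

/-- Lemma `le stat1`: in a compact metric probability space in which every ball of radius
`η/3` has measure at least `v > 0`, (a) any finite family of points whose balls of radius
`η/3` are pairwise disjoint has at most `⌊1/v⌋` elements, and consequently (b) a monotone
(decreasing) sequence of attracting sets `A_j`, each admitting a trapping region `V_j`
whose `η`-neighborhood is mapped by `f` into `V_j`, takes at most finitely many distinct
values, with a bound depending only on `v`. -/
theorem stmt_6 {X : Type*} [MetricSpace X] [CompactSpace X]
    [MeasurableSpace X] [BorelSpace X]
    (μ : Measure X) [IsProbabilityMeasure μ]
    (η v : ℝ) (hη : 0 < η) (hv : 0 < v)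
    (hball : ∀ x : X, v ≤ (μ (ball x (η / 3))).toReal)
    (f : X → X) (hf : Continuous f)
    (V : ℕ → Set X) (hVopen : ∀ j, IsOpen (V j))
    (htrap : ∀ j, f '' Metric.thickening η (V j) ⊆ V j)
    (A : ℕ → Set X) (hA : ∀ j, A j = ⋂ n : ℕ, f^[n] '' V j)
    (hmono : Antitone A) :
    (∀ s : Finset X, (∀ x ∈ s, ∀ y ∈ s, x ≠ y →
        Disjoint (ball x (η / 3)) (ball y (η / 3))) → s.card ≤ ⌊1 / v⌋₊) ∧
      (Set.range A).Finite ∧ (Set.range A).ncard ≤ ⌊1 / v⌋₊ + 1 :=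
  stmt_6_general μ η v hη hv hball f hf V htrap A hA hmono
end

section
/- Let X be a compact metric space and f : X → X continuous. Suppose K is a minimal quasi-attractor for f (a minimal element, under inclusion, of the set of nonempty intersections of attracting sets) and n ≥ 1. If K′ ⊆ K is a minimal quasi-attractor for f^n with f^n(K′) = K′ and n is minimal with this property, then the sets K′, f(K′), …, f^{n−1}(K′) are pairwise disjoint and their union equals K. -/
/-
Continuous images commute with directed intersections of closed sets in a compact space, and a
minimal quasi-attractor is such an intersection of attracting sets. Hence every `f^[i] K'` with
`i ≤ n` is a quasi-attractor of `f^[n]`, and if two of the sets `f^[i] K'` met, minimality of `K'`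
would give `f^[m] K' = K'` for some `0 < m < n`. Likewise `⋃ i < n, f^[i] K'` is the directed
intersection of the sets `⋃ i < n, f^[i] B` over attracting sets `B` of `f^[n]`, and these are
attracting sets of `f`; so the union is a quasi-attractor of `f` inside `K`, hence equal to `K`.
-/

open Set

variable {X : Type*} [MetricSpace X] [CompactSpace X]

/-- `A` is an attracting set for `g`: the intersection of the forward images of a
trapping region (a nonempty open set `U` with `g(closure U) ⊆ U`). -/
def IsAttractingSet (g : X → X) (A : Set X) : Prop :=
  ∃ U : Set X, IsOpen U ∧ U.Nonempty ∧ g '' closure U ⊆ U ∧ A = ⋂ n : ℕ, g^[n] '' U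

/-- `A` is a quasi-attractor for `g`: a nonempty intersection of attracting sets. -/
def IsQuasiAttractor (g : X → X) (A : Set X) : Prop :=
  A.Nonempty ∧ ∃ 𝒜 : Set (Set X), 𝒜.Nonempty ∧ (∀ B ∈ 𝒜, IsAttractingSet g B) ∧
    A = ⋂₀ 𝒜

/-- `K` is a minimal quasi-attractor for `g`: minimal under inclusion among
quasi-attractors. -/
def IsMinimalQuasiAttractor (g : X → X) (K : Set X) : Prop :=
  IsQuasiAttractor g K ∧ ∀ K' : Set X, IsQuasiAttractor g K' → K' ⊆ K → K' = K

open Function Metric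

section DirectedIntersection

variable {α β ι κ : Type*} [TopologicalSpace α] [CompactSpace α] [TopologicalSpace β]
  [T1Space β] [Nonempty ι] {C : ι → Set α}

theorem image_iInter_of_directed {f : α → β} (hf : Continuous f) (hd : Directed (· ⊇ ·) C)
    (hc : ∀ j, IsClosed (C j)) : f '' ⋂ j, C j = ⋂ j, f '' C j := by
  refine (image_iInter_subset _ _).antisymm fun y hy => ?_
  have hfiber (j : ι) : IsClosed (C j ∩ f ⁻¹' {y}) := (hc j).inter (isClosed_singleton.preimage hf)
  obtain ⟨x, hx⟩ := IsCompact.nonempty_iInter_of_directed_nonempty_isCompact_isClosed _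
    (hd.mono_comp _ fun _ _ h => inter_subset_inter_left _ h)
    (fun j => by obtain ⟨x, hx, rfl⟩ := mem_iInter.1 hy j; exact ⟨x, hx, rfl⟩)
    (fun j => (hfiber j).isCompact) hfiber
  exact ⟨x, mem_iInter.2 fun j => (mem_iInter.1 hx j).1,
    (mem_iInter.1 hx (Classical.arbitrary ι)).2⟩

theorem iInter_biUnion_image_of_directed {φ : κ → α → β} (hφ : ∀ r, Continuous (φ r))
    (hd : Directed (· ⊇ ·) C) (hc : ∀ j, IsClosed (C j)) (s : Finset κ) :
    ⋂ j, ⋃ r ∈ s, φ r '' C j = ⋃ r ∈ s, φ r '' ⋂ j, C j := by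
  refine Subset.antisymm (fun x hx => ?_) (iUnion₂_subset fun r hr => subset_iInter fun j =>
    (image_mono (iInter_subset C j)).trans
      (subset_iUnion₂ (s := fun r (_ : r ∈ s) => φ r '' C j) r hr))
  classical
  by_contra hx'
  have hmiss : ∀ r ∈ s, ∃ j, x ∉ φ r '' C j := by
    intro r hr
    by_contra! hall
    refine hx' (mem_biUnion hr ?_)
    rw [image_iInter_of_directed (hφ r) hd hc]
    exact mem_iInter.2 hall
  choose! J hJ using hmiss
  obtain ⟨j, hj⟩ := hd.finset_le (s.image J)
  obtain ⟨r, hr, hxr⟩ := mem_iUnion₂.1 (mem_iInter.1 hx j)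
  exact hJ r hr (image_mono (hj _ (Finset.mem_image_of_mem J hr)) hxr)

end DirectedIntersection

section TrappingRegion

variable {α : Type*} {g : α → α}

theorem subset_iInter_iterate_image {S V : Set α} (hS : S ⊆ g '' S) (hSV : S ⊆ V) :
    S ⊆ ⋂ m : ℕ, g^[m] '' V := by
  refine subset_iInter fun m => ?_
  induction m with
  | zero => simpa using hSV
  | succ m ih => rw [iterate_succ', image_comp]; exact hS.trans (image_mono ih)

variable [TopologicalSpace α] {U : Set α}

theorem antitone_iterate_image_closure (hU : g '' closure U ⊆ U) :
    Antitone fun m : ℕ => g^[m] '' closure U :=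
  antitone_nat_of_succ_le fun m => by
    rw [iterate_succ, image_comp]
    exact image_mono (hU.trans subset_closure)

theorem iInter_iterate_image_closure (hU : g '' closure U ⊆ U) :
    ⋂ m : ℕ, g^[m] '' closure U = ⋂ m : ℕ, g^[m] '' U := by
  refine Subset.antisymm (subset_iInter fun m => (iInter_subset _ (m + 1)).trans ?_)
    (iInter_mono fun m => image_mono subset_closure)
  rw [iterate_succ, image_comp]
  exact image_mono hU

variable [CompactSpace α] [T2Space α]

theorem isClosed_iterate_image_closure (hg : Continuous g) (m : ℕ) :
    IsClosed (g^[m] '' closure U) :=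
  (isClosed_closure.isCompact.image (hg.iterate m)).isClosed

theorem image_iInter_iterate_image (hg : Continuous g) (hU : g '' closure U ⊆ U) :
    g '' ⋂ m : ℕ, g^[m] '' U = ⋂ m : ℕ, g^[m] '' U := by
  rw [← iInter_iterate_image_closure hU, image_iInter_of_directed hg
    (antitone_iterate_image_closure hU).directed_ge (isClosed_iterate_image_closure hg)]
  simp_rw [← image_comp, ← iterate_succ']
  exact (antitone_iterate_image_closure hU).iInter_nat_add 1

theorem nonempty_iInter_iterate_image (hg : Continuous g) (hU : g '' closure U ⊆ U)
    (hne : U.Nonempty) : (⋂ m : ℕ, g^[m] '' U).Nonempty := by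
  rw [← iInter_iterate_image_closure hU]
  exact IsCompact.nonempty_iInter_of_directed_nonempty_isCompact_isClosed _
    (antitone_iterate_image_closure hU).directed_ge (fun m => hne.closure.image _)
    (fun m => (isClosed_iterate_image_closure hg m).isCompact) (isClosed_iterate_image_closure hg)

end TrappingRegion

namespace IsAttractingSet

variable {g : X → X} {A : Set X}

theorem nonempty (hg : Continuous g) (hA : IsAttractingSet g A) : A.Nonempty := by
  obtain ⟨U, -, hne, hU, rfl⟩ := hA
  exact nonempty_iInter_iterate_image hg hU hne

theorem isClosed (hg : Continuous g) (hA : IsAttractingSet g A) : IsClosed A := by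
  obtain ⟨U, -, -, hU, rfl⟩ := hA
  rw [← iInter_iterate_image_closure hU]
  exact isClosed_iInter (isClosed_iterate_image_closure hg)

theorem image_eq (hg : Continuous g) (hA : IsAttractingSet g A) : g '' A = A := by
  obtain ⟨U, -, -, hU, rfl⟩ := hA
  exact image_iInter_iterate_image hg hU

/-- The new trapping region is the preimage of the old one under `k`. -/
theorem image_of_comp_eq {h k : X → X} (hh : Continuous h) (hk : Continuous k)
    (hkh : k ∘ h = g) (hhk : h ∘ k = g) (hA : IsAttractingSet g A) :
    IsAttractingSet g (h '' A) := by
  have hg : Continuous g := hkh ▸ hk.comp hh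
  have hAg := hA.image_eq hg
  have hAne := hA.nonempty hg
  have hhg : Function.Commute h g := fun x => by nth_rw 1 [← hkh]; rw [← hhk]; rfl
  have hkg : Function.Commute k g := fun x => by nth_rw 1 [← hhk]; rw [← hkh]; rfl
  obtain ⟨U, hUo, -, hU, rfl⟩ := hA
  have hkhA : h '' (⋂ m : ℕ, g^[m] '' U) ⊆ k ⁻¹' U := by
    rintro _ ⟨a, ha, rfl⟩
    have hga : g a ∈ ⋂ m : ℕ, g^[m] '' U := hAg ▸ mem_image_of_mem g ha
    rw [mem_preimage, ← comp_apply (f := k), hkh]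
    simpa using mem_iInter.1 hga 0
  refine ⟨k ⁻¹' U, hUo.preimage hk, (hAne.image h).mono hkhA, ?_, ?_⟩
  · rintro _ ⟨x, hx, rfl⟩
    rw [mem_preimage, hkg.eq]
    exact hU ⟨k x, hk.closure_preimage_subset U hx, rfl⟩
  refine Subset.antisymm (subset_iInter_iterate_image ?_ hkhA) fun x hx => ?_
  · rw [← image_comp, ← hhg.comp_eq, image_comp, hAg]
  rw [← iInter_iterate_image_closure hU, image_iInter_of_directed hh
    (antitone_iterate_image_closure hU).directed_ge (isClosed_iterate_image_closure hg)]
  refine mem_iInter.2 fun m => ?_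
  obtain ⟨w, hw, rfl⟩ := mem_iInter.1 hx (m + 1)
  refine ⟨g^[m] (k w), image_mono subset_closure (mem_image_of_mem _ hw), ?_⟩
  rw [(hhg.iterate_right m).eq, ← comp_apply (f := h), hhk, iterate_succ_apply]

end IsAttractingSet

section QuasiAttractor

variable {g : X → X} {K : Set X}

theorem IsQuasiAttractor.image_subset (hg : Continuous g) (hK : IsQuasiAttractor g K) :
    g '' K ⊆ K := by
  obtain ⟨-, 𝒜, -, h𝒜, rfl⟩ := hK
  exact (image_sInter_subset _ _).trans <| subset_sInter fun A hA =>
    (biInter_subset_of_mem hA).trans ((h𝒜 A hA).image_eq hg).subset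

omit [CompactSpace X] in
theorem IsQuasiAttractor.inter {A B : Set X} (hA : IsQuasiAttractor g A)
    (hB : IsQuasiAttractor g B) (hne : (A ∩ B).Nonempty) : IsQuasiAttractor g (A ∩ B) := by
  obtain ⟨-, 𝒜, h𝒜ne, h𝒜, rfl⟩ := hA
  obtain ⟨-, ℬ, -, hℬ, rfl⟩ := hB
  exact ⟨hne, 𝒜 ∪ ℬ, h𝒜ne.mono subset_union_left, fun C hC => hC.elim (h𝒜 C) (hℬ C),
    (sInter_union _ _).symm⟩

/-- The attracting sets of the trapping regions containing `K` are directed (intersect the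
regions); their intersection is a quasi-attractor inside `K`, hence equal to `K`. -/
theorem IsMinimalQuasiAttractor.exists_directed (hg : Continuous g)
    (hK : IsMinimalQuasiAttractor g K) :
    ∃ ℬ : Set (Set X), ℬ.Nonempty ∧ DirectedOn (· ⊇ ·) ℬ ∧
      (∀ B ∈ ℬ, IsAttractingSet g B) ∧ K = ⋂₀ ℬ := by
  obtain ⟨⟨hKne, 𝒜, h𝒜ne, h𝒜, hK𝒜⟩, hmin⟩ := hK
  set ℬ := {B | ∃ U, IsOpen U ∧ g '' closure U ⊆ U ∧ K ⊆ U ∧ B = ⋂ m : ℕ, g^[m] '' U}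
  have hℬ : ∀ B ∈ ℬ, IsAttractingSet g B := fun B ⟨U, hUo, hU, hKU, hB⟩ =>
    ⟨U, hUo, hKne.mono hKU, hU, hB⟩
  have h𝒜ℬ : 𝒜 ⊆ ℬ := by
    intro A hA
    obtain ⟨U, hUo, -, hU, rfl⟩ := h𝒜 A hA
    refine ⟨U, hUo, hU, ?_, rfl⟩
    calc K ⊆ ⋂ m : ℕ, g^[m] '' U := hK𝒜 ▸ sInter_subset_of_mem hA
      _ ⊆ U := (iInter_subset _ 0).trans (by simp)
  have hdir : DirectedOn (· ⊇ ·) ℬ := by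
    rintro _ ⟨U₁, hU₁o, hU₁, hKU₁, rfl⟩ _ ⟨U₂, hU₂o, hU₂, hKU₂, rfl⟩
    refine ⟨_, ⟨U₁ ∩ U₂, hU₁o.inter hU₂o, ?_, subset_inter hKU₁ hKU₂, rfl⟩,
      iInter_mono fun m => image_mono inter_subset_left,
      iInter_mono fun m => image_mono inter_subset_right⟩
    exact (image_mono (closure_inter_subset_inter_closure _ _)).trans
      ((image_inter_subset _ _ _).trans (inter_subset_inter hU₁ hU₂))
  have hℬne : ℬ.Nonempty := h𝒜ne.mono h𝒜ℬ
  have : Nonempty ℬ := hℬne.to_subtype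
  have hquasi : IsQuasiAttractor g (⋂₀ ℬ) :=
    ⟨IsCompact.nonempty_sInter_of_directed_nonempty_isCompact_isClosed hdir
      (fun B hB => (hℬ B hB).nonempty hg) (fun B hB => ((hℬ B hB).isClosed hg).isCompact)
      (fun B hB => (hℬ B hB).isClosed hg), ℬ, hℬne, hℬ, rfl⟩
  exact ⟨ℬ, hℬne, hdir, hℬ, (hmin _ hquasi (hK𝒜 ▸ sInter_subset_sInter h𝒜ℬ)).symm⟩

theorem IsMinimalQuasiAttractor.isQuasiAttractor_image {h k : X → X} (hh : Continuous h)
    (hk : Continuous k) (hkh : k ∘ h = g) (hhk : h ∘ k = g)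
    (hK : IsMinimalQuasiAttractor g K) : IsQuasiAttractor g (h '' K) := by
  have hg : Continuous g := hkh ▸ hk.comp hh
  have hKne := hK.1.1
  obtain ⟨ℬ, hℬne, hdir, hℬ, rfl⟩ := hK.exists_directed hg
  have : Nonempty ℬ := hℬne.to_subtype
  refine ⟨hKne.image h, image h '' ℬ, hℬne.image _, ?_, ?_⟩
  · rintro _ ⟨B, hB, rfl⟩
    exact (hℬ B hB).image_of_comp_eq hh hk hkh hhk
  · rw [sInter_image, sInter_eq_iInter, image_iInter_of_directed hh
      (directedOn_iff_directed.1 hdir) fun B => (hℬ B B.2).isClosed hg, biInter_eq_iInter]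

end QuasiAttractor

theorem exists_nested_open_nhds {α : Type*} [PseudoMetricSpace α] {C U : Set α}
    (hC : IsCompact C) (hU : IsOpen U) (hCU : C ⊆ U) :
    ∃ W : ℕ → Set α, (∀ j, IsOpen (W j)) ∧ (∀ j, C ⊆ W j) ∧ (∀ j, W j ⊆ U) ∧
      ∀ j, closure (W (j + 1)) ⊆ W j := by
  obtain ⟨δ, hδ, hδU⟩ := hC.exists_cthickening_subset_open hU hCU
  have hpos (j : ℕ) : 0 < δ / (j + 1) := by positivity
  refine ⟨fun j => thickening (δ / (j + 1)) C, fun j => isOpen_thickening,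
    fun j => self_subset_thickening (hpos j) C, fun j => ?_, fun j => ?_⟩
  · refine (thickening_subset_cthickening _ _).trans ((cthickening_mono ?_ C).trans hδU)
    exact div_le_self hδ.le (by linarith [j.cast_nonneg (α := ℝ)])
  · refine (closure_thickening_subset_cthickening _ _).trans
      (cthickening_subset_thickening' (hpos j) ?_ C)
    push_cast
    gcongr
    linarith

section IterateUnion

variable {α : Type*} {f : α → α} {n : ℕ}

theorem biUnion_iterate_image_subset_image (hn : 1 ≤ n) {A : Set α} (hA : f^[n] '' A = A) :
    ⋃ i ∈ Finset.range n, f^[i] '' A ⊆ f '' ⋃ i ∈ Finset.range n, f^[i] '' A := by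
  refine iUnion₂_subset fun i hi => ?_
  rw [Finset.mem_range] at hi
  cases i with
  | zero =>
    calc f^[0] '' A = f '' (f^[n - 1] '' A) := by
          rw [iterate_zero, image_id, ← image_comp, ← iterate_succ', Nat.succ_eq_add_one,
            Nat.sub_add_cancel hn, hA]
      _ ⊆ _ := image_mono (Finset.subset_set_biUnion_of_mem (f := fun i => f^[i] '' A)
          (Finset.mem_range.2 (show n - 1 < n by omega)))
  | succ i =>
    rw [iterate_succ', image_comp]
    exact image_mono (Finset.subset_set_biUnion_of_mem (f := fun i => f^[i] '' A)
      (Finset.mem_range.2 (show i < n by omega)))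

variable [TopologicalSpace α]

/-- The index `j` of the preimage `f^[j] ⁻¹' W j` drops by one under `f`, and the wrap-around
from `j = 0` to `j = n - 1` is where the trapping property of `f^[n]` enters. -/
theorem image_closure_biUnion_iterate_preimage_subset (hf : Continuous f) (hn : 1 ≤ n)
    {W : ℕ → Set α} (hW : ∀ j, closure (W (j + 1)) ⊆ W j)
    (hW0 : f^[n] '' closure (W 0) ⊆ W (n - 1)) :
    f '' closure (⋃ j ∈ Finset.range n, f^[j] ⁻¹' W j) ⊆ ⋃ j ∈ Finset.range n, f^[j] ⁻¹' W j := by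
  rintro _ ⟨x, hx, rfl⟩
  rw [Finset.closure_biUnion] at hx
  obtain ⟨j, hj, hxj⟩ := mem_iUnion₂.1 hx
  have hxj' := (hf.iterate j).closure_preimage_subset _ hxj
  rw [Finset.mem_range] at hj
  cases j with
  | zero =>
    refine mem_biUnion (Finset.mem_range.2 (show n - 1 < n by omega)) ?_
    rw [mem_preimage, ← iterate_succ_apply, Nat.succ_eq_add_one, Nat.sub_add_cancel hn]
    exact hW0 ⟨x, by simpa using hxj', rfl⟩
  | succ j =>
    refine mem_biUnion (Finset.mem_range.2 (show j < n by omega)) ?_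
    rw [mem_preimage, ← iterate_succ_apply]
    exact hW j hxj'

variable [CompactSpace α] [T2Space α]

theorem iInter_iterate_image_biUnion_preimage (hf : Continuous f) (hn : 1 ≤ n) {U : Set α}
    (hU : f^[n] '' closure U ⊆ U) {W : ℕ → Set α} (hWU : ∀ j, W j ⊆ U)
    (hAW : ∀ j, ⋂ m : ℕ, (f^[n])^[m] '' U ⊆ W j) :
    ⋂ m : ℕ, f^[m] '' ⋃ j ∈ Finset.range n, f^[j] ⁻¹' W j =
      ⋃ i ∈ Finset.range n, f^[i] '' ⋂ m : ℕ, (f^[n])^[m] '' U := by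
  set A := ⋂ m : ℕ, (f^[n])^[m] '' U with hAdef
  have hA : f^[n] '' A = A := image_iInter_iterate_image (hf.iterate n) hU
  refine Subset.antisymm (fun x hx => ?_)
    (subset_iInter_iterate_image (biUnion_iterate_image_subset_image hn hA) ?_)
  · have hx' (q : ℕ) : x ∈ ⋃ r ∈ Finset.range n, f^[r] '' ((f^[n])^[q] '' closure U) := by
      obtain ⟨y, hy, rfl⟩ := mem_iInter.1 hx (n * q + (n - 1))
      obtain ⟨j, hj, hyj⟩ := mem_iUnion₂.1 hy
      rw [Finset.mem_range] at hj
      refine mem_biUnion (Finset.mem_range.2 (show n - 1 - j < n by omega))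
        ⟨(f^[n])^[q] (f^[j] y), image_mono subset_closure (mem_image_of_mem _ (hWU j hyj)), ?_⟩
      rw [← iterate_mul, ← iterate_add_apply, ← iterate_add_apply]
      congr 1
      omega
    rw [hAdef, ← iInter_iterate_image_closure hU, ← iInter_biUnion_image_of_directed
      (fun r => hf.iterate r) (antitone_iterate_image_closure hU).directed_ge
      (isClosed_iterate_image_closure (hf.iterate n))]
    exact mem_iInter.2 hx'
  · refine iUnion₂_subset fun i hi => ?_
    rw [Finset.mem_range] at hi
    rintro _ ⟨a, ha, rfl⟩
    cases i with
    | zero => exact mem_biUnion (Finset.mem_range.2 hn) (by simpa using hAW 0 ha)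
    | succ i =>
      refine mem_biUnion (Finset.mem_range.2 (show n - (i + 1) < n by omega)) ?_
      rw [mem_preimage, ← iterate_add_apply, Nat.sub_add_cancel hi.le]
      exact hAW _ (hA ▸ mem_image_of_mem _ ha)

end IterateUnion

theorem IsAttractingSet.biUnion_iterate_image {f : X → X} (hf : Continuous f) {n : ℕ}
    (hn : 1 ≤ n) {A : Set X} (hA : IsAttractingSet (f^[n]) A) :
    IsAttractingSet f (⋃ i ∈ Finset.range n, f^[i] '' A) := by
  have hAne := hA.nonempty (hf.iterate n)
  obtain ⟨U, hUo, -, hU, rfl⟩ := hA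
  have hAC : ⋂ m : ℕ, (f^[n])^[m] '' U ⊆ f^[n] '' closure U :=
    (iInter_subset _ 1).trans (by simpa using image_mono subset_closure)
  obtain ⟨W, hWo, hCW, hWU, hW⟩ := exists_nested_open_nhds
    (isClosed_closure.isCompact.image (hf.iterate n)) hUo hU
  have hAW (j : ℕ) := hAC.trans (hCW j)
  refine ⟨⋃ j ∈ Finset.range n, f^[j] ⁻¹' W j,
    isOpen_biUnion fun j _ => (hWo j).preimage (hf.iterate j), ?_,
    image_closure_biUnion_iterate_preimage_subset hf hn hW
      ((image_mono (closure_mono (hWU 0))).trans (hCW (n - 1))),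
    (iInter_iterate_image_biUnion_preimage hf hn hU hWU hAW).symm⟩
  obtain ⟨a, ha⟩ := hAne
  exact ⟨a, mem_biUnion (Finset.mem_range.2 hn) (by simpa using hAW 0 ha)⟩

section Splitting

variable {f : X → X} {n : ℕ} {K K' : Set X}

theorem IsMinimalQuasiAttractor.isQuasiAttractor_iterate_image (hf : Continuous f)
    (hK' : IsMinimalQuasiAttractor (f^[n]) K') {i : ℕ} (hi : i ≤ n) :
    IsQuasiAttractor (f^[n]) (f^[i] '' K') :=
  hK'.isQuasiAttractor_image (hf.iterate i) (hf.iterate (n - i))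
    (by rw [← iterate_add, Nat.sub_add_cancel hi]) (by rw [← iterate_add, Nat.add_sub_cancel' hi])

theorem IsMinimalQuasiAttractor.disjoint_iterate_image (hf : Continuous f)
    (hK' : IsMinimalQuasiAttractor (f^[n]) K') (hinv : f^[n] '' K' = K')
    (hmin : ∀ m : ℕ, 1 ≤ m → m < n → f^[m] '' K' ≠ K') {i j : ℕ} (hij : i < j) (hj : j < n) :
    Disjoint (f^[i] '' K') (f^[j] '' K') := by
  refine disjoint_left.2 ?_
  rintro _ ⟨a, ha, rfl⟩ ⟨b, hb, hab⟩
  set d := n - j + i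
  have hmeet : (f^[d] '' K' ∩ K').Nonempty := by
    refine ⟨f^[n - j] (f^[i] a), ⟨a, ha, iterate_add_apply f _ _ a⟩, ?_⟩
    rw [← hab, ← iterate_add_apply, Nat.sub_add_cancel hj.le, ← hinv]
    exact mem_image_of_mem _ hb
  have hK'd : K' ⊆ f^[d] '' K' := by
    refine inter_eq_right.1 (hK'.2 _ ?_ inter_subset_right)
    exact (hK'.isQuasiAttractor_iterate_image hf (show d ≤ n by omega)).inter hK'.1 hmeet
  have hback : f^[n - d] '' K' ⊆ K' :=
    calc f^[n - d] '' K' ⊆ f^[n - d] '' (f^[d] '' K') := image_mono hK'd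
      _ = K' := by rw [← image_comp, ← iterate_add, Nat.sub_add_cancel (by omega), hinv]
  exact hmin (n - d) (by omega) (by omega)
    (hK'.2 _ (hK'.isQuasiAttractor_iterate_image hf (Nat.sub_le n d)) hback)

theorem IsMinimalQuasiAttractor.biUnion_iterate_image_eq (hf : Continuous f)
    (hK' : IsMinimalQuasiAttractor (f^[n]) K') (hK : IsMinimalQuasiAttractor f K) (hn : 1 ≤ n)
    (hsub : K' ⊆ K) : ⋃ i ∈ Finset.range n, f^[i] '' K' = K := by
  have hg := hf.iterate n
  obtain ⟨a, ha⟩ := hK'.1.1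
  obtain ⟨ℬ, hℬne, hdir, hℬ, rfl⟩ := hK'.exists_directed hg
  have : Nonempty ℬ := hℬne.to_subtype
  have hfK (i : ℕ) : f^[i] '' K ⊆ K :=
    ((mapsTo_iff_image_subset.2 (hK.1.image_subset hf)).iterate i).image_subset
  refine hK.2 _ ⟨⟨a, mem_biUnion (Finset.mem_range.2 hn) ⟨a, ha, rfl⟩⟩,
    (fun B => ⋃ i ∈ Finset.range n, f^[i] '' B) '' ℬ, hℬne.image _, ?_, ?_⟩
    (iUnion₂_subset fun i _ => (image_mono hsub).trans (hfK i))
  · rintro _ ⟨B, hB, rfl⟩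
    exact (hℬ B hB).biUnion_iterate_image hf hn
  · rw [sInter_image, biInter_eq_iInter, sInter_eq_iInter, iInter_biUnion_image_of_directed
      (fun i => hf.iterate i) (directedOn_iff_directed.1 hdir) fun B => (hℬ B B.2).isClosed hg]

end Splitting

/-- Splitting of a minimal quasi-attractor under iteration: if `K` is a minimal
quasi-attractor for `f`, `K' ⊆ K` is a minimal quasi-attractor for `fⁿ` with
`fⁿ(K') = K'` and `n ≥ 1` minimal with this property, then the sets
`K', f(K'), …, f^{n-1}(K')` are pairwise disjoint and their union is `K`. -/
theorem stmt_17 (f : X → X) (hf : Continuous f)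
    (K K' : Set X) (hK : IsMinimalQuasiAttractor f K)
    (n : ℕ) (hn : 1 ≤ n)
    (hK' : IsMinimalQuasiAttractor (f^[n]) K') (hsub : K' ⊆ K)
    (hinv : f^[n] '' K' = K')
    (hmin : ∀ m : ℕ, 1 ≤ m → m < n → f^[m] '' K' ≠ K') :
    (∀ i < n, ∀ j < n, i ≠ j → Disjoint (f^[i] '' K') (f^[j] '' K')) ∧
      (⋃ i ∈ Finset.range n, f^[i] '' K') = K := by
  refine ⟨fun i hi j hj hij => ?_, hK'.biUnion_iterate_image_eq hf hK hn hsub⟩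
  rcases hij.lt_or_gt with h | h
  · exact hK'.disjoint_iterate_image hf hinv hmin h hj
  · exact (hK'.disjoint_iterate_image hf hinv hmin h hi).symm
end
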